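/- Let X be a finite poset, A ⊆ X a down set, and b ∈ X. The maps q : X'(A) ∩ X'({b}) → Sd(A ∩ U_b), q(σ) = σ ∩ A ∩ U_b, and i_b : Sd(A ∩ U_b) → X'(A) ∩ X'({b}), i_b(τ) = τ ∪ {b}, are well-defined monotone maps which are mutually inverse homotopy equivalences (q∘i_b ≥ id and i_b∘q ≤ id pointwise). -/

import Mathlib

open Topology

/-- The barycentric subdivision of a poset `X`: the poset of nonempty finite chains of `X`,
ordered by inclusion. -/
abbrev Sd (X : Type*) [PartialOrder X] : Type _ :=
  {σ : Finset X // σ.Nonempty ∧ IsChain (· ≤ ·) (σ : Set X)}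

/-- `X'(A) ∩ X'({b})`: chains meeting `A` and containing `b`. -/
abbrev ExchAb {X : Type*} [PartialOrder X] [DecidableEq X] (A : Finset X) (b : X) : Type _ :=
  {σ : Sd X // (σ.1 ∩ A).Nonempty ∧ b ∈ σ.1}

/-- `Sd (A ∩ U_b)`: chains contained in `A ∩ U_b`. -/
abbrev SdAUb {X : Type*} [PartialOrder X] (A : Finset X) (b : X) : Type _ :=
  {σ : Sd X // σ.1 ⊆ A ∧ ∀ x ∈ σ.1, x ≤ b}

/-- Pointwise comparable monotone maps induce homotopic maps on lower-set (Alexandroff) spaces. -/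
noncomputable def homotopyOfLE {α β : Type*} [Preorder α] [Preorder β] (f g : α →o β)
    (h : ∀ x, f x ≤ g x) :
    (Topology.WithLowerSet.map f).Homotopy (Topology.WithLowerSet.map g) where
  toFun p := if p.1 = 1 then g p.2 else f p.2
  continuous_toFun := by
    rw [continuous_def]
    intro U hU
    have hUl : IsLowerSet U := by
      rwa [Topology.IsLowerSet.isOpen_iff_isLowerSet] at hU
    have key : (fun p : unitInterval × Topology.WithLowerSet α =>
          if p.1 = 1 then g p.2 else f p.2) ⁻¹' U =
        ((Set.univ : Set unitInterval) ×ˢ {x : Topology.WithLowerSet α | g x ∈ U}) ∪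
          ({t : unitInterval | t ≠ 1} ×ˢ {x : Topology.WithLowerSet α | f x ∈ U}) := by
      ext ⟨t, x⟩
      simp only [Set.mem_preimage, Set.mem_union, Set.mem_prod, Set.mem_univ, true_and,
        Set.mem_setOf_eq, ne_eq]
      by_cases ht : t = 1
      · erw [Set.mem_preimage, if_pos ht]
        constructor
        · exact fun hm => Or.inl hm
        · rintro (hm | ⟨ht', _⟩)
          · exact hm
          · exact absurd ht ht'
      · erw [Set.mem_preimage, if_neg ht]
        constructor
        · exact fun hm => Or.inr ⟨ht, hm⟩
        · rintro (hm | ⟨_, hm⟩)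
          · exact hUl (h x) hm
          · exact hm
    erw [key]
    apply IsOpen.union
    · exact isOpen_univ.prod (hU.preimage (Topology.WithLowerSet.map g).continuous)
    · exact isOpen_ne.prod (hU.preimage (Topology.WithLowerSet.map f).continuous)
  map_zero_left x := by
    show (if (0 : unitInterval) = 1 then g x else f x) = _
    rw [if_neg (fun hc => by simpa using congrArg Subtype.val hc)]; rfl
  map_one_left x := by
    show (if (1 : unitInterval) = 1 then g x else f x) = _
    rw [if_pos rfl]; rfl

/-- For a down set `A` of a finite poset `X` and `b ∈ X`, the maps
`q : X'(A) ∩ X'({b}) → Sd (A ∩ U_b)`, `q σ = σ ∩ A ∩ U_b`, and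
`i_b : Sd (A ∩ U_b) → X'(A) ∩ X'({b})`, `i_b τ = τ ∪ {b}`, are well-defined monotone maps
with `q ∘ i_b ≥ id` and `i_b ∘ q ≤ id` pointwise; they are mutually inverse homotopy
equivalences of the associated finite (Alexandroff) spaces. -/
theorem exch_interval_homotopy_equiv {X : Type*} [PartialOrder X] [Fintype X] [DecidableEq X]
    (A : Finset X) (hA : IsLowerSet (A : Set X)) (b : X) :
    ∃ (q : ExchAb A b →o SdAUb A b) (ib : SdAUb A b →o ExchAb A b),
      (∀ σ : ExchAb A b, ∀ x : X, x ∈ (q σ).1.1 ↔ x ∈ σ.1.1 ∧ x ∈ A ∧ x ≤ b) ∧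
      (∀ τ : SdAUb A b, ((ib τ).1 : Finset X) = insert b τ.1.1) ∧
      (∀ τ : SdAUb A b, τ ≤ q (ib τ)) ∧
      (∀ σ : ExchAb A b, ib (q σ) ≤ σ) ∧
      Nonempty (((Topology.WithLowerSet.map ib).comp (Topology.WithLowerSet.map q)).Homotopy
        (ContinuousMap.id (Topology.WithLowerSet (ExchAb A b)))) ∧
      Nonempty (((Topology.WithLowerSet.map q).comp (Topology.WithLowerSet.map ib)).Homotopy
        (ContinuousMap.id (Topology.WithLowerSet (SdAUb A b)))) := by
  classical
  -- the map q
  set P : X → Prop := fun x => x ∈ A ∧ x ≤ b with hP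
  have qdef : ∀ σ : ExchAb A b, (σ.1.1.filter P).Nonempty ∧
      IsChain (· ≤ ·) ((σ.1.1.filter P : Finset X) : Set X) := by
    intro σ
    constructor
    · obtain ⟨a, ha⟩ := σ.2.1
      rw [Finset.mem_inter] at ha
      have hb := σ.2.2
      rcases eq_or_ne a b with rfl | hab
      · exact ⟨a, Finset.mem_filter.2 ⟨ha.1, ha.2, le_refl _⟩⟩
      · rcases σ.1.2.2 ha.1 hb hab with h1 | h1
        · exact ⟨a, Finset.mem_filter.2 ⟨ha.1, ha.2, h1⟩⟩
        · exact ⟨b, Finset.mem_filter.2 ⟨hb, hA h1 ha.2, le_refl _⟩⟩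
    · exact σ.1.2.2.mono (Finset.coe_subset.2 (Finset.filter_subset P _))
  set qm : ExchAb A b →o SdAUb A b := ⟨fun σ => ⟨⟨σ.1.1.filter P, qdef σ⟩,
      fun x hx => (Finset.mem_filter.1 hx).2.1,
      fun x hx => (Finset.mem_filter.1 hx).2.2⟩,
      fun σ τ hst => Finset.filter_subset_filter P hst⟩ with hqm
  have ibdef : ∀ τ : SdAUb A b, ((insert b τ.1.1 : Finset X).Nonempty ∧
        IsChain (· ≤ ·) ((insert b τ.1.1 : Finset X) : Set X)) := by
    intro τ
    refine ⟨⟨b, Finset.mem_insert_self _ _⟩, ?_⟩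
    intro x hx y hy hxy
    simp only [Finset.coe_insert, Set.mem_insert_iff, Finset.mem_coe] at hx hy
    rcases hx with rfl | hx
    · rcases hy with rfl | hy
      · exact absurd rfl hxy
      · exact Or.inr (τ.2.2 _ hy)
    · rcases hy with rfl | hy
      · exact Or.inl (τ.2.2 _ hx)
      · exact τ.1.2.2 hx hy hxy
  have ibmem : ∀ τ : SdAUb A b, ((insert b τ.1.1 : Finset X) ∩ A).Nonempty := by
    intro τ
    obtain ⟨a, ha⟩ := τ.1.2.1
    exact ⟨a, Finset.mem_inter.2 ⟨Finset.mem_insert_of_mem ha, τ.2.1 ha⟩⟩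
  set ibm : SdAUb A b →o ExchAb A b := ⟨fun τ => ⟨⟨insert b τ.1.1, ibdef τ⟩, ibmem τ,
      Finset.mem_insert_self _ _⟩,
      fun σ τ hst => Finset.insert_subset_insert _ hst⟩ with hibm
  have h1 : ∀ τ : SdAUb A b, τ ≤ qm (ibm τ) := by
    intro τ x hx
    exact Finset.mem_filter.2 ⟨Finset.mem_insert_of_mem hx, τ.2.1 hx, τ.2.2 _ hx⟩
  have h2 : ∀ σ : ExchAb A b, ibm (qm σ) ≤ σ := by
    intro σ x hx
    rcases Finset.mem_insert.1 hx with rfl | hx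
    · exact σ.2.2
    · exact Finset.filter_subset _ _ hx
  have e1 : (Topology.WithLowerSet.map ibm).comp (Topology.WithLowerSet.map qm) =
      Topology.WithLowerSet.map (ibm.comp qm) := rfl
  have e2 : ContinuousMap.id (Topology.WithLowerSet (ExchAb A b)) =
      Topology.WithLowerSet.map (OrderHom.id) := rfl
  have e3 : (Topology.WithLowerSet.map qm).comp (Topology.WithLowerSet.map ibm) =
      Topology.WithLowerSet.map (qm.comp ibm) := rfl
  have e4 : ContinuousMap.id (Topology.WithLowerSet (SdAUb A b)) =
      Topology.WithLowerSet.map (OrderHom.id) := rfl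
  refine ⟨qm, ibm, ?_, ?_, h1, h2, ?_, ?_⟩
  · intro σ x; exact Finset.mem_filter.trans (by tauto)
  · intro τ; rfl
  · rw [e1, e2]
    exact ⟨homotopyOfLE (ibm.comp qm) OrderHom.id h2⟩
  · rw [e3, e4]
    refine ⟨(homotopyOfLE OrderHom.id (qm.comp ibm) h1).symm⟩
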